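/- arXiv:1201.1137 — 2 statements merged into one kernel-verified Lean document; each statement's English description precedes it below -/
import Mathlib

section
/- Let K be a field of characteristic zero and let f = (aX_1 + p, g) ∈ GA_n(K), where a ∈ K^*, p ∈ K[X_2,...,X_n], and g ∈ GA_{n−1}(K) is an automorphism in the variables X_2,...,X_n. Suppose f has finite order. Then there exists h ∈ EA_n(K) with h(X_i) = X_i for all i ≥ 2 (i.e. h = (X_1 − q, X_2,...,X_n) for some q ∈ K[X_2,...,X_n]) such that h^{−1}∘f∘h = (aX_1, g). In particular, every finite-order triangular automorphism over K is linearizable, i.e. conjugate in GA_n(K) to a linear automorphism. -/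
open MvPolynomial

/-- `f` is an invertible polynomial map (polynomial automorphism). -/
def IsPolyAut {K : Type*} [CommSemiring K] {n : ℕ}
    (f : Fin n → MvPolynomial (Fin n) K) : Prop :=
  ∃ g : Fin n → MvPolynomial (Fin n) K,
    (∀ i, bind₁ g (f i) = X i) ∧ (∀ i, bind₁ f (g i) = X i)

/-- `k`-fold composition of a polynomial map with itself. -/
noncomputable def tupleIter {K : Type*} [CommSemiring K] {n : ℕ}
    (f : Fin n → MvPolynomial (Fin n) K) : ℕ → Fin n → MvPolynomial (Fin n) K
  | 0 => fun i => X i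
  | (k + 1) => fun i => bind₁ f (tupleIter f k i)


section Helpers
variable {K : Type*} [CommSemiring K] {σ : Type*} {τ : Type*}

lemma st18_bind₁_congr_supported {s : Set σ} {r : MvPolynomial σ K}
    (hr : r ∈ supported K s) (F G : σ → MvPolynomial τ K)
    (h : ∀ j ∈ s, F j = G j) : bind₁ F r = bind₁ G r := by
  refine Algebra.adjoin_induction (fun x hx => ?_) (fun c => ?_)
    (fun x y _ _ hx hy => ?_) (fun x y _ _ hx hy => ?_) hr
  · obtain ⟨j, hj, rfl⟩ := hx
    simp [bind₁_X_right, h j hj]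
  · simp
  · simp [map_add, hx, hy]
  · simp [map_mul, hx, hy]

lemma st18_bind₁_mem_supported {s : Set σ} {t : Set τ} {r : MvPolynomial σ K}
    (hr : r ∈ supported K s) (F : σ → MvPolynomial τ K)
    (h : ∀ j ∈ s, F j ∈ supported K t) : bind₁ F r ∈ supported K t := by
  refine Algebra.adjoin_induction (fun x hx => ?_) (fun c => ?_)
    (fun x y _ _ hx hy => ?_) (fun x y _ _ hx hy => ?_) hr
  · obtain ⟨j, hj, rfl⟩ := hx
    simpa [bind₁_X_right] using h j hj
  · simpa using (supported K t).algebraMap_mem c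
  · rw [map_add]; exact add_mem hx hy
  · rw [map_mul]; exact mul_mem hx hy

lemma st18_coeff_single_eq_zero {s : Set σ} {i : σ} (hi : i ∉ s) {r : MvPolynomial σ K}
    (hr : r ∈ supported K s) : coeff (Finsupp.single i 1) r = 0 := by
  by_contra h
  exact hi (mem_supported.1 hr (by
    simpa using (mem_vars i).2 ⟨Finsupp.single i 1, mem_support_iff.2 h, by simp⟩))

lemma rename_mem_supported_ne_zero {m : ℕ} (r : MvPolynomial (Fin m) K) :
    rename Fin.succ r ∈ supported K {j : Fin (m+1) | j ≠ 0} := by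
  rw [mem_supported]
  intro j hj
  obtain ⟨k, _, rfl⟩ := Finset.mem_image.1 (vars_rename Fin.succ r (by simpa using hj))
  exact Fin.succ_ne_zero k

/-- composition of polynomial maps: `(pcomp u v)(x) = u(v(x))`. -/
noncomputable def pcomp {n m l : ℕ} (u : Fin n → MvPolynomial (Fin m) K)
    (v : Fin m → MvPolynomial (Fin l) K) : Fin n → MvPolynomial (Fin l) K :=
  fun j => bind₁ v (u j)

lemma pcomp_assoc {n m l r : ℕ} (u : Fin n → MvPolynomial (Fin m) K)
    (v : Fin m → MvPolynomial (Fin l) K) (w : Fin l → MvPolynomial (Fin r) K) :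
    pcomp (pcomp u v) w = pcomp u (pcomp v w) := by
  funext j; simp only [pcomp, bind₁_bind₁]; rfl

lemma pcomp_X_left {n m : ℕ} (u : Fin n → MvPolynomial (Fin m) K) :
    pcomp (fun i => (X i : MvPolynomial (Fin n) K)) u = u := by
  funext j; simp [pcomp]

lemma pcomp_X_right {n m : ℕ} (u : Fin n → MvPolynomial (Fin m) K) :
    pcomp u (fun i => X i) = u := by
  funext j; simp [pcomp, bind₁_X_left]

lemma tupleIter_succ' {n : ℕ} (f : Fin n → MvPolynomial (Fin n) K) (k : ℕ) :
    tupleIter f (k+1) = pcomp f (tupleIter f k) := by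
  induction k with
  | zero => funext i; simp [tupleIter, pcomp, bind₁_X_left]
  | succ k ih =>
      funext i
      show bind₁ f (tupleIter f (k+1) i) = bind₁ (tupleIter f (k+1)) (f i)
      rw [show tupleIter f (k+1) i = bind₁ (tupleIter f k) (f i) from congrFun ih i,
        bind₁_bind₁]
      rfl

lemma tupleIter_pcomp {n : ℕ} (f : Fin n → MvPolynomial (Fin n) K) (k : ℕ) :
    tupleIter f (k+1) = pcomp (tupleIter f k) f := rfl

end Helpers

section Core
variable {K : Type*} [Field K] [CharZero K]

lemma tupleIter_conj {n : ℕ} (U V W : Fin n → MvPolynomial (Fin n) K)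
    (hUV : pcomp U V = fun i => X i) (hVU : pcomp V U = fun i => X i) (k : ℕ) :
    tupleIter (pcomp (pcomp U W) V) k = pcomp (pcomp U (tupleIter W k)) V := by
  induction k with
  | zero =>
      show (fun i => (X i : MvPolynomial (Fin n) K)) = _
      rw [show tupleIter W 0 = fun i => (X i : MvPolynomial (Fin n) K) from rfl,
        pcomp_X_right, hUV]
  | succ k ih =>
      rw [tupleIter_pcomp _ k, ih, pcomp_assoc (pcomp U (tupleIter W k)) V,
        ← pcomp_assoc V (pcomp U W) V, ← pcomp_assoc V U W, hVU, pcomp_X_left,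
        ← pcomp_assoc (pcomp U (tupleIter W k)) W V, pcomp_assoc U (tupleIter W k) W,
        ← tupleIter_pcomp W k]

lemma st18_core {m : ℕ} (a : K) (ha : a ≠ 0) (p : MvPolynomial (Fin (m+1)) K)
    (hp : p ∈ supported K {j | j ≠ 0})
    (f : Fin (m+1) → MvPolynomial (Fin (m+1)) K)
    (hf0 : f 0 = C a * X 0 + p)
    (hfs : ∀ j, j ≠ 0 → f j ∈ supported K {j : Fin (m+1) | j ≠ 0})
    (d : ℕ) (hd : 0 < d) (horder : tupleIter f d = fun i => X i) :
    ∃ q ∈ supported K {j : Fin (m+1) | j ≠ 0}, bind₁ f q = C a * q - p := by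
  classical
  set P : ℕ → MvPolynomial (Fin (m+1)) K :=
    fun k => Nat.rec 0 (fun k Pk => C (a^k) * p + bind₁ f Pk) k with hP
  have hPsucc : ∀ k, P (k+1) = C (a^k) * p + bind₁ f (P k) := fun k => rfl
  have hPmem : ∀ k, P k ∈ supported K {j : Fin (m+1) | j ≠ 0} := by
    intro k
    induction k with
    | zero => exact zero_mem _
    | succ k ih =>
        rw [hPsucc]
        exact add_mem (mul_mem (Subalgebra.algebraMap_mem _ _) hp)
          (st18_bind₁_mem_supported ih f (fun j hj => hfs j hj))
  have hPiter : ∀ k, tupleIter f k 0 = C (a^k) * X 0 + P k := by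
    intro k
    induction k with
    | zero => simp [tupleIter, hP]
    | succ k ih =>
        show bind₁ f (tupleIter f k 0) = _
        rw [ih, map_add, map_mul, bind₁_C_right, bind₁_X_right, hf0, hPsucc,
          pow_succ, C_mul]
        ring
  have hda : C (a^d) * X 0 + P d = (X 0 : MvPolynomial (Fin (m+1)) K) := by
    rw [← hPiter, horder]
  have had : a ^ d = 1 := by
    have := congrArg (coeff (Finsupp.single 0 1)) hda
    rw [coeff_add, coeff_C_mul, coeff_X,
      st18_coeff_single_eq_zero (by simp) (hPmem d)] at this
    simpa using this
  have hPd : P d = 0 := by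
    have h2 := hda
    rw [had, C_1, one_mul] at h2
    exact add_eq_left.mp h2
  have hdK : (d : K) ≠ 0 := Nat.cast_ne_zero.2 hd.ne'
  set h : ℕ → MvPolynomial (Fin (m+1)) K := fun k => C ((a⁻¹)^k) * P k with hh
  set S : MvPolynomial (Fin (m+1)) K := ∑ k ∈ Finset.range d, h k with hSdef
  have hsum : ∑ k ∈ Finset.range d, h (k+1) = S := by
    have e1 := Finset.sum_range_succ' h d
    have e2 := Finset.sum_range_succ h d
    have h0 : h 0 = 0 := by simp [hh, hP]
    have hd0 : h d = 0 := by simp [hh, hPd]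
    rw [e2, hd0, add_zero] at e1
    rw [h0, add_zero] at e1
    exact e1.symm
  refine ⟨C ((d:K)⁻¹) * S, ?_, ?_⟩
  · exact mul_mem (Subalgebra.algebraMap_mem _ _)
      (sum_mem fun k _ => mul_mem (Subalgebra.algebraMap_mem _ _) (hPmem k))
  · have hbS : bind₁ f S = C a * S - C (d : K) * p := by
      have e3 : ∀ k, bind₁ f (h k) = C a * h (k+1) - p := by
        intro k
        have : bind₁ f (P k) = P (k+1) - C (a^k) * p := by
          rw [hPsucc]; ring
        rw [hh, map_mul, bind₁_C_right, this]
        have hc : (C ((a⁻¹)^k) : MvPolynomial (Fin (m+1)) K) * C (a^k) = 1 := by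
          rw [← C_mul, ← mul_pow, inv_mul_cancel₀ ha, one_pow, C_1]
        have hc2 : (C a : MvPolynomial (Fin (m+1)) K) * C ((a⁻¹)^(k+1)) = C ((a⁻¹)^k) := by
          rw [← C_mul, pow_succ, ← mul_assoc]
          rw [mul_comm a, mul_assoc, mul_inv_cancel₀ ha, mul_one]
        calc C ((a⁻¹)^k) * (P (k+1) - C (a^k) * p)
            = C ((a⁻¹)^k) * P (k+1) - (C ((a⁻¹)^k) * C (a^k)) * p := by ring
          _ = C a * (C ((a⁻¹)^(k+1)) * P (k+1)) - p := by rw [hc, one_mul, ← hc2]; ring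
          _ = C a * h (k+1) - p := rfl
      rw [hSdef, map_sum]
      rw [Finset.sum_congr rfl (fun k _ => e3 k), Finset.sum_sub_distrib,
        ← Finset.mul_sum, hsum, Finset.sum_const, Finset.card_range,
        nsmul_eq_mul]
      rw [show ((d : ℕ) : MvPolynomial (Fin (m+1)) K) = C (d : K) from (map_natCast C d).symm]
    rw [map_mul, bind₁_C_right, hbS, mul_sub]
    have : (C ((d:K)⁻¹) : MvPolynomial (Fin (m+1)) K) * C (d:K) = 1 := by
      rw [← C_mul, inv_mul_cancel₀ hdK, C_1]
    calc C ((d:K)⁻¹) * (C a * S) - C ((d:K)⁻¹) * (C (d:K) * p)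
        = C a * (C ((d:K)⁻¹) * S) - (C ((d:K)⁻¹) * C (d:K)) * p := by ring
      _ = C a * (C ((d:K)⁻¹) * S) - p := by rw [this, one_mul]



lemma st18_bind₁_X_id {n : ℕ} (r : MvPolynomial (Fin n) K) :
    bind₁ (fun i : Fin n => (X i : MvPolynomial (Fin n) K)) r = r := by
  rw [show (fun i : Fin n => (X i : MvPolynomial (Fin n) K)) = X from rfl, bind₁_X_left]
  rfl

lemma st18_conj_step {m : ℕ} (a : K) (p q : MvPolynomial (Fin (m+1)) K)
    (hp : p ∈ supported K {j | j ≠ 0}) (hq : q ∈ supported K {j | j ≠ 0})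
    (f : Fin (m+1) → MvPolynomial (Fin (m+1)) K)
    (hf0 : f 0 = C a * X 0 + p)
    (hfs : ∀ j, j ≠ 0 → f j ∈ supported K {j : Fin (m+1) | j ≠ 0})
    (hfq : bind₁ f q = C a * q - p) :
    ∀ i, bind₁ (fun j => bind₁ (fun k : Fin (m+1) => if k = 0 then X 0 - q else X k) (f j))
      ((fun k : Fin (m+1) => if k = 0 then X 0 + q else X k) i)
      = if i = 0 then C a * X 0 else f i := by
  classical
  set h' : Fin (m+1) → MvPolynomial (Fin (m+1)) K :=
    fun k => if k = 0 then X 0 - q else X k with hh'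
  have hfix : ∀ r ∈ supported K {j : Fin (m+1) | j ≠ 0}, bind₁ h' r = r := by
    intro r hr
    rw [st18_bind₁_congr_supported hr h' (fun i => X i) (fun k hk => by simp [hh', if_neg hk]),
      st18_bind₁_X_id]
  have key : ∀ j, j ≠ 0 → bind₁ h' (f j) = f j := fun j hj => hfix _ (hfs j hj)
  intro i
  by_cases hi : i = 0
  · subst hi
    show bind₁ _ (if (0 : Fin (m+1)) = 0 then X 0 + q else X 0)
      = if (0 : Fin (m+1)) = 0 then C a * X 0 else f 0
    rw [if_pos rfl, if_pos rfl, map_add, bind₁_X_right,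
      st18_bind₁_congr_supported hq (fun j => bind₁ h' (f j)) f (fun j hj => key j hj), hfq,
      hf0, map_add, map_mul, bind₁_C_right, bind₁_X_right, hfix p hp]
    simp only [hh', if_pos rfl]
    ring
  · show bind₁ _ (if i = 0 then X 0 + q else X i) = if i = 0 then C a * X 0 else f i
    rw [if_neg hi, if_neg hi, bind₁_X_right]
    exact key i hi

lemma st18_conj_inv {m : ℕ} (q : MvPolynomial (Fin (m+1)) K)
    (hq : q ∈ supported K {j | j ≠ 0}) :
    pcomp (fun k : Fin (m+1) => if k = 0 then X 0 + q else X k)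
        (fun k : Fin (m+1) => if k = 0 then X 0 - q else X k) = (fun i => X i) ∧
    pcomp (fun k : Fin (m+1) => if k = 0 then X 0 - q else X k)
        (fun k : Fin (m+1) => if k = 0 then X 0 + q else X k) = (fun i => X i) := by
  classical
  have hfix : ∀ (v : Fin (m+1) → MvPolynomial (Fin (m+1)) K),
      (∀ k, k ≠ 0 → v k = X k) → bind₁ v q = q := by
    intro v hv
    rw [st18_bind₁_congr_supported hq v (fun i => X i) (fun k hk => hv k hk), st18_bind₁_X_id]
  constructor
  · funext j
    by_cases hj : j = 0
    · subst hj
      show bind₁ _ (if (0 : Fin (m+1)) = 0 then X 0 + q else X 0) = X 0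
      rw [if_pos rfl, map_add, bind₁_X_right, if_pos rfl,
        hfix _ (fun k hk => if_neg hk)]
      ring
    · show bind₁ _ (if j = 0 then X 0 + q else X j) = X j
      rw [if_neg hj, bind₁_X_right, if_neg hj]
  · funext j
    by_cases hj : j = 0
    · subst hj
      show bind₁ _ (if (0 : Fin (m+1)) = 0 then X 0 - q else X 0) = X 0
      rw [if_pos rfl, map_sub, bind₁_X_right, if_pos rfl,
        hfix _ (fun k hk => if_neg hk)]
      ring
    · show bind₁ _ (if j = 0 then X 0 - q else X j) = X j
      rw [if_neg hj, bind₁_X_right, if_neg hj]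

lemma st18_rename_span {m : ℕ} {r : MvPolynomial (Fin m) K}
    (hr : r ∈ Submodule.span K (Set.range (X : Fin m → MvPolynomial (Fin m) K))) :
    rename Fin.succ r ∈
      Submodule.span K (Set.range (X : Fin (m+1) → MvPolynomial (Fin (m+1)) K)) := by
  refine Submodule.span_induction (fun x hx => ?_) ?_ (fun x y _ _ hx hy => ?_)
    (fun c x _ hx => ?_) hr
  · obtain ⟨k, rfl⟩ := hx
    rw [rename_X]
    exact Submodule.subset_span ⟨k.succ, rfl⟩
  · rw [map_zero]; exact zero_mem _
  · rw [map_add]; exact add_mem hx hy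
  · rw [map_smul]; exact Submodule.smul_mem _ _ hx

lemma st18_lift_comp {m : ℕ} (A B : Fin m → MvPolynomial (Fin m) K) :
    pcomp (fun j : Fin (m+1) => Fin.cases (X 0) (fun k => rename Fin.succ (A k)) j)
        (fun j : Fin (m+1) => Fin.cases (X 0) (fun k => rename Fin.succ (B k)) j)
      = fun j : Fin (m+1) =>
          Fin.cases (X 0) (fun k => rename Fin.succ (bind₁ B (A k))) j := by
  funext j
  refine Fin.cases ?_ (fun k => ?_) j
  · show bind₁ _ (X (0 : Fin (m+1))) = _
    rw [bind₁_X_right]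
    simp
  · show bind₁ _ (rename Fin.succ (A k)) = _
    rw [bind₁_rename, Fin.cases_succ]
    have : ((fun j : Fin (m+1) => Fin.cases (X 0) (fun k => rename Fin.succ (B k)) j)
        ∘ Fin.succ) = fun l : Fin m => rename Fin.succ (B l) := by
      funext l; simp [Function.comp]
    rw [this, ← rename_bind₁]

lemma st18_lift_X {m : ℕ} :
    (fun j : Fin (m+1) =>
        Fin.cases (X 0) (fun k => rename Fin.succ ((X : Fin m → MvPolynomial (Fin m) K) k)) j)
      = fun j : Fin (m+1) => X j := by
  funext j
  refine Fin.cases ?_ (fun k => ?_) j <;> simp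

lemma st18_lin : ∀ (m : ℕ) (F : Fin m → MvPolynomial (Fin m) K),
    (∀ i : Fin m, ∃ (b : K) (pi : MvPolynomial (Fin m) K), b ≠ 0 ∧
      pi ∈ supported K {j : Fin m | i < j} ∧ F i = C b * X i + pi) →
    (∃ e : ℕ, 0 < e ∧ tupleIter F e = fun i => X i) →
    ∃ G G' : Fin m → MvPolynomial (Fin m) K,
      (∀ i, bind₁ G' (G i) = X i) ∧ (∀ i, bind₁ G (G' i) = X i) ∧
      ∀ i, bind₁ (fun j => bind₁ G' (F j)) (G i) ∈
        Submodule.span K (Set.range (X : Fin m → MvPolynomial (Fin m) K)) := by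
  intro m
  induction m with
  | zero =>
      intro F _ _
      exact ⟨fun i => X i, fun i => X i, fun i => i.elim0, fun i => i.elim0,
        fun i => i.elim0⟩
  | succ m ih =>
      intro F htri hord
      classical
      obtain ⟨e, he, hIter⟩ := hord
      obtain ⟨b, p0, hb, hp0mem, hF0⟩ := htri 0
      have hp0 : p0 ∈ supported K {j : Fin (m+1) | j ≠ 0} :=
        supported_mono (fun j hj => Fin.pos_iff_ne_zero.mp hj) hp0mem
      have hFs : ∀ j, j ≠ 0 → F j ∈ supported K {j : Fin (m+1) | j ≠ 0} := by
        intro j hj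
        obtain ⟨b', p', hb', hp', hFj⟩ := htri j
        rw [hFj]
        refine add_mem (mul_mem (Subalgebra.algebraMap_mem _ _) (X_mem_supported.2 hj)) ?_
        exact supported_mono (fun k hk =>
          Fin.pos_iff_ne_zero.mp ((Fin.zero_le j).trans_lt hk)) hp'
      set dfun : Fin (m+1) → MvPolynomial (Fin m) K :=
        fun j => Fin.cases 0 (fun k => X k) j with hdfun
      have up_dn : ∀ r ∈ supported K {j : Fin (m+1) | j ≠ 0},
          rename Fin.succ (bind₁ dfun r) = r := by
        intro r hr
        rw [rename_bind₁,
          st18_bind₁_congr_supported hr _ (fun i => X i) (fun j hj => ?_), st18_bind₁_X_id]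
        obtain ⟨k, rfl⟩ := Fin.eq_succ_of_ne_zero hj
        rw [hdfun]
        simp
      set F' : Fin m → MvPolynomial (Fin m) K := fun i => bind₁ dfun (F i.succ) with hF'
      have hFup : ∀ i, F i.succ = rename Fin.succ (F' i) :=
        fun i => (up_dn _ (hFs _ (Fin.succ_ne_zero i))).symm
      have hbindup : ∀ r : MvPolynomial (Fin m) K,
          bind₁ F (rename Fin.succ r) = rename Fin.succ (bind₁ F' r) := by
        intro r
        rw [bind₁_rename, show (F ∘ Fin.succ) = fun k => rename Fin.succ (F' k) from
          funext fun k => hFup k, ← rename_bind₁]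
      have hIterS : ∀ k i, tupleIter F k i.succ = rename Fin.succ (tupleIter F' k i) := by
        intro k
        induction k with
        | zero => intro i; simp [tupleIter]
        | succ k ihk =>
            intro i
            show bind₁ F (tupleIter F k i.succ) = _
            rw [ihk i, hbindup]
            rfl
      have hIter' : tupleIter F' e = fun i => X i := by
        funext i
        apply rename_injective Fin.succ (Fin.succ_injective m)
        rw [← hIterS e i, hIter]
        simp
      have htri' : ∀ i : Fin m, ∃ (b' : K) (pi' : MvPolynomial (Fin m) K), b' ≠ 0 ∧
          pi' ∈ supported K {j : Fin m | i < j} ∧ F' i = C b' * X i + pi' := by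
        intro i
        obtain ⟨b', p', hb', hp', hFj⟩ := htri i.succ
        refine ⟨b', bind₁ dfun p', hb', ?_, ?_⟩
        · refine st18_bind₁_mem_supported hp' _ (fun j hj => ?_)
          obtain ⟨k, rfl⟩ := Fin.eq_succ_of_ne_zero
            (Fin.pos_iff_ne_zero.mp ((Fin.zero_le i.succ).trans_lt hj))
          rw [hdfun]
          simp only [Fin.cases_succ]
          exact X_mem_supported.2 (Fin.succ_lt_succ_iff.mp hj)
        · show bind₁ dfun (F i.succ) = C b' * X i + bind₁ dfun p'
          rw [hFj, map_add, map_mul, bind₁_C_right, bind₁_X_right, hdfun]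
          simp
      obtain ⟨G₁, G₁', hg1, hg1', hspan1⟩ := ih F' htri' ⟨e, he, hIter'⟩
      set H : Fin (m+1) → MvPolynomial (Fin (m+1)) K :=
        fun j => Fin.cases (X 0) (fun k => rename Fin.succ (G₁ k)) j with hH
      set H' : Fin (m+1) → MvPolynomial (Fin (m+1)) K :=
        fun j => Fin.cases (X 0) (fun k => rename Fin.succ (G₁' k)) j with hH'
      have hHH' : pcomp H H' = fun i => X i := by
        rw [hH, hH', st18_lift_comp]
        simp only [hg1]
        exact st18_lift_X
      have hH'H : pcomp H' H = fun i => X i := by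
        rw [hH, hH', st18_lift_comp]
        simp only [hg1']
        exact st18_lift_X
      set F₂ : Fin (m+1) → MvPolynomial (Fin (m+1)) K := pcomp (pcomp H F) H' with hF₂
      set p₂ : MvPolynomial (Fin (m+1)) K := bind₁ H' p0 with hp₂def
      have hF₂0 : F₂ 0 = C b * X 0 + p₂ := by
        show bind₁ H' (bind₁ F (H 0)) = _
        rw [show H 0 = X 0 from rfl, bind₁_X_right, hF0, map_add, map_mul,
          bind₁_C_right, bind₁_X_right, show H' 0 = X 0 from rfl]
      have hH'mem : ∀ j, j ≠ 0 → H' j ∈ supported K {j : Fin (m+1) | j ≠ 0} := by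
        intro j hj
        obtain ⟨k, rfl⟩ := Fin.eq_succ_of_ne_zero hj
        rw [show H' k.succ = rename Fin.succ (G₁' k) from by rw [hH']; simp]
        exact rename_mem_supported_ne_zero _
      have hp₂ : p₂ ∈ supported K {j : Fin (m+1) | j ≠ 0} :=
        st18_bind₁_mem_supported hp0 H' hH'mem
      have hF₂tail : ∀ k, F₂ k.succ =
          rename Fin.succ (bind₁ (fun j => bind₁ G₁' (F' j)) (G₁ k)) := by
        intro k
        show bind₁ H' (bind₁ F (H k.succ)) = _
        rw [show H k.succ = rename Fin.succ (G₁ k) from by rw [hH]; simp,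
          hbindup, bind₁_rename,
          show (H' ∘ Fin.succ) = fun l => rename Fin.succ (G₁' l) from
            funext fun l => by rw [hH']; simp,
          ← rename_bind₁, bind₁_bind₁]
      have hfs₂ : ∀ j, j ≠ 0 → F₂ j ∈ supported K {j : Fin (m+1) | j ≠ 0} := by
        intro j hj
        obtain ⟨k, rfl⟩ := Fin.eq_succ_of_ne_zero hj
        rw [hF₂tail k]
        exact rename_mem_supported_ne_zero _
      have hIter₂ : tupleIter F₂ e = fun i => X i := by
        rw [hF₂, tupleIter_conj H H' F hHH' hH'H e, hIter, pcomp_X_right, hHH']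
      obtain ⟨q, hq, hfq⟩ := st18_core b hb p₂ hp₂ F₂ hF₂0 hfs₂ e he hIter₂
      set H₂ : Fin (m+1) → MvPolynomial (Fin (m+1)) K :=
        fun k => if k = 0 then X 0 + q else X k with hH₂
      set H₂' : Fin (m+1) → MvPolynomial (Fin (m+1)) K :=
        fun k => if k = 0 then X 0 - q else X k with hH₂'
      obtain ⟨hi1, hi2⟩ := st18_conj_inv q hq
      have hstep := st18_conj_step b p₂ q hp₂ hq F₂ hF₂0 hfs₂ hfq
      refine ⟨pcomp H₂ H, pcomp H' H₂', ?_, ?_, ?_⟩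
      · intro i
        have : pcomp (pcomp H₂ H) (pcomp H' H₂') = fun i => X i := by
          rw [pcomp_assoc, ← pcomp_assoc H H' H₂', hHH', pcomp_X_left, hi1]
        exact congrFun this i
      · intro i
        have : pcomp (pcomp H' H₂') (pcomp H₂ H) = fun i => X i := by
          rw [pcomp_assoc, ← pcomp_assoc H₂' H₂ H, hi2, pcomp_X_left, hH'H]
        exact congrFun this i
      · intro i
        have hrewrite : (fun i => bind₁ (fun j => bind₁ (pcomp H' H₂') (F j))
              (pcomp H₂ H i)) = pcomp H₂ (pcomp F₂ H₂') := by
          show pcomp (pcomp H₂ H) (pcomp F (pcomp H' H₂')) = _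
          rw [← pcomp_assoc F H' H₂', pcomp_assoc H₂ H (pcomp (pcomp F H') H₂'),
            ← pcomp_assoc H (pcomp F H') H₂', ← pcomp_assoc H F H']
        have := congrFun hrewrite i
        rw [show bind₁ (fun j => bind₁ (pcomp H' H₂') (F j)) (pcomp H₂ H i)
            = pcomp H₂ (pcomp F₂ H₂') i from this]
        have hval : pcomp H₂ (pcomp F₂ H₂') i = if i = 0 then C b * X 0 else F₂ i :=
          hstep i
        rw [hval]
        by_cases hi : i = 0
        · rw [if_pos hi]
          have : (C b * X 0 : MvPolynomial (Fin (m+1)) K) = b • X 0 := by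
            rw [smul_eq_C_mul]
          rw [this]
          exact Submodule.smul_mem _ _ (Submodule.subset_span ⟨0, rfl⟩)
        · rw [if_neg hi]
          obtain ⟨k, rfl⟩ := Fin.eq_succ_of_ne_zero hi
          rw [hF₂tail k]
          exact st18_rename_span (hspan1 k)

end Core

/-- Let `f = (aX_1 + p, g) ∈ GA_n(K)` over a characteristic-zero
field, with `a ∈ K^*`, `p ∈ K[X_2,…,X_n]` and `g` an automorphism in the variables
`X_2,…,X_n`.  If `f` has finite order, then there is `h = (X_1 - q, X_2, …, X_n)`
(elementary, fixing `X_i` for `i ≥ 2`) with `h⁻¹ ∘ f ∘ h = (aX_1, g)`.  In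
particular, every triangular automorphism of finite order is linearizable. -/
theorem statement_18 (K : Type*) [Field K] [CharZero K] (n : ℕ)
    (a : K) (ha : a ≠ 0) (p : MvPolynomial (Fin (n + 1)) K)
    (hp : p ∈ MvPolynomial.supported K {j : Fin (n + 1) | j ≠ 0})
    (g : Fin n → MvPolynomial (Fin n) K) (hg : IsPolyAut g)
    (f : Fin (n + 1) → MvPolynomial (Fin (n + 1)) K)
    (hf0 : f 0 = C a * X 0 + p)
    (hfs : ∀ i : Fin n, f i.succ = rename Fin.succ (g i))
    (hfaut : IsPolyAut f)
    (d : ℕ) (hd : 0 < d) (horder : tupleIter f d = fun i => X i) :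
    (∃ qq : MvPolynomial (Fin (n + 1)) K,
      qq ∈ MvPolynomial.supported K {j : Fin (n + 1) | j ≠ 0} ∧
      ∀ i : Fin (n + 1),
        bind₁
          (fun j : Fin (n + 1) =>
            bind₁ (fun k : Fin (n + 1) => if k = 0 then X 0 - qq else X k) (f j))
          ((fun k : Fin (n + 1) => if k = 0 then X 0 + qq else X k) i) =
        if i = 0 then C a * X 0 else f i) ∧
    (∀ (m : ℕ) (F : Fin m → MvPolynomial (Fin m) K), IsPolyAut F →
      (∀ i : Fin m, ∃ (b : K) (pi : MvPolynomial (Fin m) K), b ≠ 0 ∧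
        pi ∈ MvPolynomial.supported K {j : Fin m | i < j} ∧ F i = C b * X i + pi) →
      (∃ e : ℕ, 0 < e ∧ tupleIter F e = fun i => X i) →
      ∃ G G' : Fin m → MvPolynomial (Fin m) K,
        (∀ i, bind₁ G' (G i) = X i) ∧ (∀ i, bind₁ G (G' i) = X i) ∧
        ∀ i, bind₁ (fun j => bind₁ G' (F j)) (G i) ∈
          Submodule.span K (Set.range (X : Fin m → MvPolynomial (Fin m) K))) := by
  constructor
  · have hfs' : ∀ j, j ≠ 0 → f j ∈ supported K {j : Fin (n+1) | j ≠ 0} := by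
      intro j hj
      obtain ⟨k, rfl⟩ := Fin.eq_succ_of_ne_zero hj
      rw [hfs k]
      exact rename_mem_supported_ne_zero _
    obtain ⟨q, hq, hfq⟩ := st18_core a ha p hp f hf0 hfs' d hd horder
    exact ⟨q, hq, st18_conj_step a p q hp hq f hf0 hfs' hfq⟩
  · intro m F _ htri hord
    exact st18_lin m F htri hord
end

section
/- Let K be a field of characteristic zero and let f ∈ K[X_1,...,X_n] be a polynomial without mixed terms, written f = f_1 + ... + f_n with f_i ∈ K[X_i] for all i. Then f is a coordinate (a component of a polynomial automorphism of K[X_1,...,X_n]) if and only if at least one of the f_i has degree exactly 1. -/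
open MvPolynomial

/-- Over a field of characteristic zero, a polynomial
`f = f_1 + ⋯ + f_n` without mixed terms (each `f_i ∈ K[X_i]`) is a coordinate of
a polynomial automorphism if and only if at least one of the `f_i` has degree
exactly `1`. -/
theorem statement_19 (K : Type*) [Field K] [CharZero K] (n : ℕ)
    (g : Fin n → Polynomial K) :
    (∃ F : Fin n → MvPolynomial (Fin n) K, IsPolyAut F ∧
      ∃ i, F i = ∑ j : Fin n, Polynomial.aeval (X j : MvPolynomial (Fin n) K) (g j)) ↔
    (∃ i, (g i).degree = 1) := by
  classical
  constructor
  · rintro ⟨F, ⟨G, hGF, hFG⟩, i, hFi⟩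
    by_contra hcon
    push_neg at hcon
    set L := AlgebraicClosure K
    have hroot : ∀ j : Fin n, ∃ a : L,
        Polynomial.aeval a (Polynomial.derivative (g j)) = 0 := by
      intro j
      by_cases h0 : Polynomial.derivative (g j) = 0
      · exact ⟨0, by simp [h0]⟩
      · have hnd : (Polynomial.derivative (g j)).natDegree ≠ 0 := by
          intro hnd0
          have hgne : (g j).natDegree ≠ 0 := by
            intro h
            obtain ⟨c, hc⟩ := Polynomial.natDegree_eq_zero.mp h
            rw [← hc] at h0
            simp at h0
          have hco : (Polynomial.derivative (g j)).coeff ((g j).natDegree - 1) ≠ 0 := by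
            rw [Polynomial.coeff_derivative]
            have h1 : (g j).natDegree - 1 + 1 = (g j).natDegree :=
              Nat.succ_pred_eq_of_pos (Nat.pos_of_ne_zero hgne)
            rw [h1]
            have hlc : (g j).coeff (g j).natDegree ≠ 0 := by
              rw [← Polynomial.leadingCoeff]
              exact Polynomial.leadingCoeff_ne_zero.mpr fun h => hgne (by simp [h])
            have hcast : ((((g j).natDegree - 1 : ℕ) : K) + 1) ≠ 0 := by
              have : (((g j).natDegree - 1 : ℕ) : K) + 1 = (((g j).natDegree - 1 + 1 : ℕ) : K) := by
                push_cast; ring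
              rw [this, h1]
              exact Nat.cast_ne_zero.mpr hgne
            exact mul_ne_zero hlc hcast
          have hle : (g j).natDegree - 1 ≤ (Polynomial.derivative (g j)).natDegree :=
            Polynomial.le_natDegree_of_ne_zero hco
          rw [hnd0] at hle
          have hd1 : (g j).natDegree = 1 := le_antisymm (Nat.le_of_sub_eq_zero
            (Nat.le_zero.mp hle)) (Nat.pos_of_ne_zero hgne)
          have : (g j).degree = 1 := by
            rw [Polynomial.degree_eq_natDegree (fun h => hgne (by simp [h])), hd1]
            rfl
          exact hcon j this
        set q := (Polynomial.derivative (g j)).map (algebraMap K L) with hq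
        have hqd : q.degree ≠ 0 := by
          intro hdq
          apply hnd
          have := Polynomial.natDegree_map_eq_of_injective
            (algebraMap K L).injective (Polynomial.derivative (g j))
          rw [← this, Polynomial.natDegree_eq_zero_iff_degree_le_zero, hdq]
        obtain ⟨z, hz⟩ := IsAlgClosed.exists_root q hqd
        refine ⟨z, ?_⟩
        rw [Polynomial.aeval_def, ← Polynomial.eval_map]
        exact hz
    choose a ha using hroot
    have key : (X i : MvPolynomial (Fin n) K) =
        ∑ j : Fin n, Polynomial.aeval (G j) (g j) := by
      rw [← hGF i, hFi, map_sum]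
      refine Finset.sum_congr rfl fun j _ => ?_
      rw [← Polynomial.aeval_algHom_apply (bind₁ G) (X j) (g j), bind₁_X_right]
    have key2 : (1 : MvPolynomial (Fin n) K) =
        ∑ j : Fin n, Polynomial.aeval (G j) (Polynomial.derivative (g j)) *
          pderiv i (G j) := by
      have h := congrArg (pderiv i) key
      rw [pderiv_X_self, map_sum] at h
      rw [h]
      refine Finset.sum_congr rfl fun j _ => ?_
      rw [Derivation.map_aeval, smul_eq_mul]
    set x : Fin n → L := fun k => aeval a (F k) with hx
    have hxG : ∀ j, aeval x (G j) = a j := by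
      intro j
      have := aeval_bind₁ (R := K) a F (G j)
      rw [hFG j, aeval_X] at this
      exact this.symm
    have hone : (1 : L) = 0 := by
      have h := congrArg (aeval x : MvPolynomial (Fin n) K →ₐ[K] L) key2
      rw [map_one, map_sum] at h
      rw [h]
      refine Finset.sum_eq_zero fun j _ => ?_
      rw [map_mul, ← Polynomial.aeval_algHom_apply (aeval x) (G j)
        (Polynomial.derivative (g j)), hxG, ha, zero_mul]
    exact one_ne_zero hone
  · rintro ⟨i, hdeg⟩
    set a := (g i).coeff 1 with haa
    set b := (g i).coeff 0 with hbb
    have ha : a ≠ 0 := Polynomial.coeff_ne_zero_of_eq_degree hdeg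
    have hgi : g i = Polynomial.C a * Polynomial.X + Polynomial.C b :=
      Polynomial.eq_X_add_C_of_degree_le_one hdeg.le
    set S : MvPolynomial (Fin n) K :=
      ∑ j ∈ Finset.univ.erase i, Polynomial.aeval (X j) (g j) with hS
    have hsum : (∑ j : Fin n, Polynomial.aeval (X j : MvPolynomial (Fin n) K) (g j))
        = Polynomial.aeval (X i : MvPolynomial (Fin n) K) (g i) + S :=
      (Finset.add_sum_erase Finset.univ _ (Finset.mem_univ i)).symm
    have haev : ∀ q : MvPolynomial (Fin n) K,
        Polynomial.aeval q (g i) = C a * q + C b := by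
      intro q
      rw [hgi]
      simp [algebraMap_eq]
    set F : Fin n → MvPolynomial (Fin n) K :=
      fun j => if j = i then Polynomial.aeval (X i) (g i) + S else X j with hF
    set G : Fin n → MvPolynomial (Fin n) K :=
      fun j => if j = i then C a⁻¹ * (X i - C b - S) else X j with hG
    have hfix : ∀ (φ : Fin n → MvPolynomial (Fin n) K),
        (∀ j, j ≠ i → φ j = X j) → bind₁ φ S = S := by
      intro φ hφ
      rw [hS, map_sum]
      refine Finset.sum_congr rfl fun j hj => ?_
      rw [← Polynomial.aeval_algHom_apply (bind₁ φ) (X j) (g j), bind₁_X_right,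
        hφ j (Finset.ne_of_mem_erase hj)]
    have hGne : ∀ j, j ≠ i → G j = X j := fun j hj => by simp [hG, hj]
    have hFne : ∀ j, j ≠ i → F j = X j := fun j hj => by simp [hF, hj]
    have hCC : (C a : MvPolynomial (Fin n) K) * C a⁻¹ = 1 := by
      rw [← C_mul, mul_inv_cancel₀ ha, C_1]
    refine ⟨F, ⟨G, ?_, ?_⟩, i, ?_⟩
    · intro k
      by_cases hk : k = i
      · subst hk
        have hFk : F k = Polynomial.aeval (X k) (g k) + S := by simp [hF]
        rw [hFk, map_add, hfix G hGne,
          ← Polynomial.aeval_algHom_apply (bind₁ G) (X k) (g k), bind₁_X_right,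
          haev]
        have hGk : G k = C a⁻¹ * (X k - C b - S) := by simp [hG]
        rw [hGk, ← mul_assoc, hCC, one_mul]
        ring
      · rw [hFne k hk, bind₁_X_right, hGne k hk]
    · intro k
      by_cases hk : k = i
      · subst hk
        have hGk : G k = C a⁻¹ * (X k - C b - S) := by simp [hG]
        have hFk : F k = Polynomial.aeval (X k) (g k) + S := by simp [hF]
        rw [hGk, map_mul, map_sub, map_sub, bind₁_X_right, hfix F hFne,
          bind₁_C_right, bind₁_C_right, hFk, haev]
        rw [show C a * X k + C b + S - C b - S = C a * X k by ring,
          ← mul_assoc, mul_comm (C a⁻¹) (C a), hCC, one_mul]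
      · rw [hGne k hk, bind₁_X_right, hFne k hk]
    · have : F i = Polynomial.aeval (X i : MvPolynomial (Fin n) K) (g i) + S := by
        simp [hF]
      rw [this, hsum]
end
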